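/- Let n be a positive even integer, let U be a rational spectral unit of finite order with Fourier coefficients (ξ_l), and let j be a positive divisor of n with 0 < j < n such that n/j is even. Then ξ_j^{n/j} = 1, i.e. ξ_j is a power of exp(2πi·j/n). -/

import Mathlib

open Matrix

/-- The Fourier coefficient of `u : ZMod n → ℂ` at `l`:
`ξ_l = ∑_{t} u(t) · exp(2πi·l·t/n)`. -/
noncomputable def zmodFourier (n : ℕ) [NeZero n] (u : ZMod n → ℂ) (l : ZMod n) : ℂ :=
  ∑ t : ZMod n, u t * Complex.exp (2 * Real.pi * Complex.I * ((l.val : ℂ) * (t.val : ℂ)) / n)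

/-!
With `ω = exp(2πi·j/n)`, a primitive `(n/j)`-th root of unity, `ξ_j = ∑ u(t) ω^t` lies in
`ℚ(ω)`. It is the eigenvalue of `U` on the character vector `t ↦ ω^(-t)`, so `U^m = 1` makes it
a root of unity. Finally, if `ω` is a primitive `q`-th root of unity with `q` even, every root of
unity `x ∈ ℚ(ω)` satisfies `x^q = 1`: if `x` has order `d`, then `ℚ(ω)` contains a primitive
`lcm(d, q)`-th root of unity, so `φ(lcm(d, q)) ≤ [ℚ(ω) : ℚ] = φ(q)`, and for even `q` this
forces `lcm(d, q) = q`.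
-/

namespace Matrix

variable {R G : Type*} [CommRing R] [Fintype G] [AddCommGroup G]

theorem circulant_mulVec_addChar (v : G → R) (ψ : AddChar G R) :
    circulant v *ᵥ (fun t ↦ ψ (-t)) = (∑ s, v s * ψ s) • fun t ↦ ψ (-t) := by
  ext i
  simp only [mulVec, dotProduct, circulant_apply, Pi.smul_apply, smul_eq_mul, Finset.sum_mul]
  refine Fintype.sum_equiv (Equiv.subLeft i) _ _ fun t ↦ ?_
  rw [Equiv.subLeft_apply, mul_assoc, ← AddChar.map_add_eq_mul]
  congr 2
  abel

theorem pow_mulVec_of_mulVec_eq_smul {n : Type*} [Fintype n] [DecidableEq n] {A : Matrix n n R}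
    {w : n → R} {c : R} (h : A *ᵥ w = c • w) (m : ℕ) : A ^ m *ᵥ w = c ^ m • w := by
  induction m with
  | zero => simp
  | succ m ih => rw [pow_succ, ← mulVec_mulVec, h, mulVec_smul, ih, smul_smul, ← pow_succ']

theorem sum_mul_addChar_pow_eq_one_of_circulant_pow_eq_one [DecidableEq G] {v : G → R} {m : ℕ}
    (hm : circulant v ^ m = 1) (ψ : AddChar G R) : (∑ s, v s * ψ s) ^ m = 1 := by
  have h := congrFun (pow_mulVec_of_mulVec_eq_smul (circulant_mulVec_addChar v ψ) m) 0
  simpa [hm] using h.symm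

end Matrix

theorem IsPrimitiveRoot.pow_eq_one_of_isOfFinOrder_of_mem_adjoin {L : Type*} [CommRing L]
    [IsDomain L] [Algebra ℚ L] {ζ x : L} {q : ℕ} (hζ : IsPrimitiveRoot ζ q) (hq : Even q)
    (hx : x ∈ Algebra.adjoin ℚ {ζ}) (hfin : IsOfFinOrder x) : x ^ q = 1 := by
  rcases eq_or_ne q 0 with rfl | hq0
  · simp
  have : NeZero q := ⟨hq0⟩
  set K := Algebra.adjoin ℚ {ζ}
  have : IsCyclotomicExtension {q} ℚ K := hζ.adjoin_isCyclotomicExtension ℚ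
  have : FiniteDimensional ℚ K := IsCyclotomicExtension.finiteDimensional {q} ℚ K
  have hxK : IsPrimitiveRoot (⟨x, hx⟩ : K) (orderOf x) := by
    rw [← IsPrimitiveRoot.coe_submonoidClass_iff]
    exact IsPrimitiveRoot.orderOf x
  have hζK : IsPrimitiveRoot (⟨ζ, Algebra.self_mem_adjoin_singleton ℚ ζ⟩ : K) q := by
    rw [← IsPrimitiveRoot.coe_submonoidClass_iff]
    exact hζ
  have hlcm : 0 < Nat.lcm (orderOf x) q := Nat.lcm_pos hfin.orderOf_pos (NeZero.pos q)
  have hle := hxK.lcm_totient_le_finrank hζK (Polynomial.cyclotomic.irreducible_rat hlcm)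
  rw [IsCyclotomicExtension.finrank K (Polynomial.cyclotomic.irreducible_rat (NeZero.pos q))]
    at hle
  have hge : q.totient ≤ (Nat.lcm (orderOf x) q).totient :=
    Nat.le_of_dvd (Nat.totient_pos.2 hlcm) (Nat.totient_dvd_of_dvd (Nat.dvd_lcm_right _ _))
  have hq_eq := hq.eq_of_totient_eq_totient (Nat.dvd_lcm_right _ _) (le_antisymm hge hle)
  exact orderOf_dvd_iff_pow_eq_one.1 (hq_eq ▸ Nat.dvd_lcm_left _ _)

theorem ZMod.isPrimitiveRoot_stdAddChar_natCast {n j : ℕ} [NeZero n] (hj : j ∣ n) :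
    IsPrimitiveRoot (stdAddChar (j : ZMod n)) (n / j) := by
  have hj0 : j ≠ 0 := ne_zero_of_dvd_ne_zero (NeZero.ne n) hj
  have hone : IsPrimitiveRoot (stdAddChar (1 : ZMod n)) n := by
    rw [← Int.cast_one, ZMod.stdAddChar_coe]
    simpa using Complex.isPrimitiveRoot_exp n (NeZero.ne n)
  simpa [← AddChar.map_nsmul_eq_pow] using hone.pow_of_dvd hj0 hj

section zmodFourier

variable {n : ℕ} [NeZero n]

theorem zmodFourier_eq_sum_stdAddChar (u : ZMod n → ℂ) (l : ZMod n) :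
    zmodFourier n u l = ∑ t, u t * ZMod.stdAddChar (l * t) := by
  refine Finset.sum_congr rfl fun t _ ↦ ?_
  have hlt : l * t = ((l.val * t.val : ℕ) : ℤ) := by simp
  rw [hlt, ZMod.stdAddChar_coe]
  push_cast
  ring_nf

theorem zmodFourier_pow_eq_one_of_circulant_pow_eq_one {u : ZMod n → ℚ} {m : ℕ}
    (hm : circulant u ^ m = 1) (l : ZMod n) : zmodFourier n (fun t ↦ (u t : ℂ)) l ^ m = 1 := by
  have hmℂ : circulant (fun t ↦ (u t : ℂ)) ^ m = 1 := by
    have h := congrArg (Rat.castHom ℂ).mapMatrix hm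
    rwa [map_pow, map_one, RingHom.mapMatrix_apply, map_circulant] at h
  rw [zmodFourier_eq_sum_stdAddChar]
  exact sum_mul_addChar_pow_eq_one_of_circulant_pow_eq_one hmℂ (ZMod.stdAddChar.mulShift l)

theorem zmodFourier_mem_adjoin_stdAddChar (u : ZMod n → ℚ) (l : ZMod n) :
    zmodFourier n (fun t ↦ (u t : ℂ)) l ∈ Algebra.adjoin ℚ {ZMod.stdAddChar l} := by
  rw [zmodFourier_eq_sum_stdAddChar]
  refine sum_mem fun t _ ↦ mul_mem (Subalgebra.algebraMap_mem _ (u t)) ?_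
  rw [← ZMod.natCast_zmod_val t, mul_comm, ← nsmul_eq_mul, AddChar.map_nsmul_eq_pow]
  exact pow_mem (Algebra.self_mem_adjoin_singleton ℚ _) _

end zmodFourier

theorem even_spectral_unit_divisor_even_quotient_general
    (n : ℕ) [NeZero n]
    (u : ZMod n → ℚ)
    (hfin : ∃ m : ℕ, 1 ≤ m ∧ Matrix.circulant u ^ m = 1)
    (j : ℕ) (hjdvd : j ∣ n) (hq : Even (n / j)) :
    (zmodFourier n (fun t => (u t : ℂ)) (j : ZMod n)) ^ (n / j) = 1 := by
  obtain ⟨m, hm_pos, hm⟩ := hfin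
  have hξ_fin : IsOfFinOrder (zmodFourier n (fun t => (u t : ℂ)) (j : ZMod n)) :=
    isOfFinOrder_iff_pow_eq_one.2 ⟨m, hm_pos, zmodFourier_pow_eq_one_of_circulant_pow_eq_one hm j⟩
  exact (ZMod.isPrimitiveRoot_stdAddChar_natCast hjdvd).pow_eq_one_of_isOfFinOrder_of_mem_adjoin
    hq (zmodFourier_mem_adjoin_stdAddChar u j) hξ_fin

/-- For `n` even and a rational spectral unit of finite order, if `j` is a strict positive
divisor of `n` with `n/j` even, then `ξ_j ^ (n/j) = 1`. -/
theorem even_spectral_unit_divisor_even_quotient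
    (n : ℕ) [NeZero n] (hn : 0 < n) (hneven : Even n)
    (u : ZMod n → ℚ)
    (hunit : Matrix.circulant u * (Matrix.circulant u)ᵀ = 1)
    (hfin : ∃ m : ℕ, 1 ≤ m ∧ Matrix.circulant u ^ m = 1)
    (j : ℕ) (hjdvd : j ∣ n) (hjpos : 0 < j) (hjlt : j < n) (hq : Even (n / j)) :
    (zmodFourier n (fun t => (u t : ℂ)) (j : ZMod n)) ^ (n / j) = 1 :=
  even_spectral_unit_divisor_even_quotient_general n u hfin j hjdvd hq
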